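/- arXiv:2003.06174 — 3 statements merged into one kernel-verified Lean document; each statement's English description precedes it below -/
import Mathlib

section
/- Let G be a finite tree (possibly with ends, i.e. half-edges attached to a single vertex), and let m ≥ 1. A condition flow of type m on G is an assignment R of natural numbers to all half-edges and ends such that (P1) for every bounded edge e with half-edges e₁, e₂ one has R(e₁) + R(e₂) = m − 1, and (P2) for every vertex v, the sum of R over all incoming edges of v (i.e. ends at v together with, for each bounded edge at v, the half-edge adjacent to the other endpoint) equals leak(v). Then a condition flow of type m on G is uniquely determined by the leak function leak : V(G) → ℕ and the values of R on the ends of G; i.e., two condition flows of type m with the same leak function and the same flows on all ends are equal. -/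
/-!
Put `D(v, w) = R(v, w) - R'(v, w)`. By (P1), `D(v, w) = -D(w, v)` on every edge, and by (P2) the
values `D(u, w)` over the neighbours `u` of `w` sum to zero. Removing the edge `vw` splits the tree;
induct on the size of the side containing `w`. Each other neighbour `u` of `w` has a strictly
smaller side, so `D(w, u) = 0`, hence `D(u, w) = 0`, and the vanishing sum at `w` leaves `D(v, w) = 0`.
-/

open Finset

namespace SimpleGraph

variable {V : Type*} {G : SimpleGraph V}

def branch (G : SimpleGraph V) (v w : V) : Set V :=
  {z | (G.deleteEdges {s(v, w)}).Reachable w z}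

theorem mem_branch_iff {v w z : V} : z ∈ G.branch v w ↔ ∃ p : G.Walk w z, s(v, w) ∉ p.edges :=
  reachable_deleteEdges_iff_exists_walk

theorem IsAcyclic.notMem_branch (hG : G.IsAcyclic) {v w : V} (hvw : G.Adj v w) :
    v ∉ G.branch v w := fun h =>
  isBridge_iff.mp (isAcyclic_iff_forall_adj_isBridge.mp hG hvw) h.symm

theorem IsAcyclic.branch_ssubset_branch (hG : G.IsAcyclic) {v w u : V} (hvw : G.Adj v w)
    (hwu : G.Adj w u) (huv : u ≠ v) : G.branch w u ⊂ G.branch v w := by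
  classical
  refine (Set.ssubset_iff_of_subset fun z hz => ?_).mpr
    ⟨w, Reachable.refl w, hG.notMem_branch hwu⟩
  obtain ⟨p, hp⟩ := mem_branch_iff.mp hz
  have hvw_notMem : s(v, w) ∉ p.edges := fun h => by
    have hw := p.snd_mem_support_of_mem_edges h
    exact hG.notMem_branch hwu <| mem_branch_iff.mpr
      ⟨p.takeUntil w hw, fun h' => hp (p.edges_takeUntil_subset_edges hw h')⟩
  refine mem_branch_iff.mpr ⟨.cons hwu p, ?_⟩
  simp [huv.symm, hvw.ne, hvw_notMem]

theorem IsAcyclic.eq_of_adj_of_add_swap_eq_of_sum_eq [Fintype V] [DecidableRel G.Adj]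
    {M : Type*} [AddCancelCommMonoid M] (hG : G.IsAcyclic) {R R' : V → V → M}
    (hedge : ∀ v w, G.Adj v w → R v w + R w v = R' v w + R' w v)
    (hin : ∀ w, ∑ u ∈ G.neighborFinset w, R u w = ∑ u ∈ G.neighborFinset w, R' u w)
    {v w : V} (hvw : G.Adj v w) : R v w = R' v w := by
  classical
  suffices ∀ s : Set V, ∀ v w, G.Adj v w → G.branch v w = s → R v w = R' v w from
    this _ v w hvw rfl
  intro s
  induction s using WellFoundedLT.induction with
  | _ s ih =>
  rintro v w hvw rfl
  have hout : ∀ u ∈ (G.neighborFinset w).erase v, R u w = R' u w := by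
    intro u hu
    obtain ⟨huv, hwu⟩ := mem_erase.mp hu
    rw [mem_neighborFinset] at hwu
    have hwu_eq := ih _ (hG.branch_ssubset_branch hvw hwu huv) w u hwu rfl
    exact add_left_cancel (hwu_eq ▸ hedge w u hwu)
  have hv : v ∈ G.neighborFinset w := (mem_neighborFinset _ _ _).mpr hvw.symm
  have hsum := hin w
  rw [← add_sum_erase _ _ hv, ← add_sum_erase _ _ hv, sum_congr rfl hout] at hsum
  exact add_right_cancel hsum

end SimpleGraph

/-- `R v w` is the flow on the half-edge of the edge `{v, w}` adjacent to `v`; the ends form the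
finite type `E`, attached by `endVertex` and carrying the flows `Rend`. -/
theorem condition_flow_unique_general
    {V E : Type*} [Fintype V] [DecidableEq V] [Fintype E]
    (G : SimpleGraph V) [DecidableRel G.Adj] (hT : G.IsTree)
    (m : ℕ)
    (endVertex : E → V) (Rend : E → ℕ) (leak : V → ℕ)
    (R R' : V → V → ℕ)
    (hP1 : ∀ v w, G.Adj v w → R v w + R w v = m - 1)
    (hP1' : ∀ v w, G.Adj v w → R' v w + R' w v = m - 1)
    (hP2 : ∀ v, (∑ e : E, if endVertex e = v then Rend e else 0)
        + ∑ w ∈ G.neighborFinset v, R w v = leak v)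
    (hP2' : ∀ v, (∑ e : E, if endVertex e = v then Rend e else 0)
        + ∑ w ∈ G.neighborFinset v, R' w v = leak v) :
    ∀ v w, G.Adj v w → R v w = R' v w := fun _ _ =>
  hT.isAcyclic.eq_of_adj_of_add_swap_eq_of_sum_eq
    (fun v w h => (hP1 v w h).trans (hP1' v w h).symm)
    (fun w => add_left_cancel ((hP2 w).trans (hP2' w).symm))

/-- Uniqueness of a condition flow of type `m` on a finite tree.
`R v w` is the flow on the half-edge of the bounded edge `{v,w}` adjacent to `v`;
ends are modeled by a finite type `E` with attachment vertex `endVertex` and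
fixed end flows `Rend`.  The flow of a vertex `v` is the sum of the end flows at `v`
together with, for each bounded edge at `v`, the flow of the half-edge adjacent to
the other endpoint. -/
theorem condition_flow_unique
    {V E : Type*} [Fintype V] [DecidableEq V] [Fintype E]
    (G : SimpleGraph V) [DecidableRel G.Adj] (hT : G.IsTree)
    (m : ℕ) (hm : 1 ≤ m)
    (endVertex : E → V) (Rend : E → ℕ) (leak : V → ℕ)
    (R R' : V → V → ℕ)
    (hP1 : ∀ v w, G.Adj v w → R v w + R w v = m - 1)
    (hP1' : ∀ v w, G.Adj v w → R' v w + R' w v = m - 1)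
    (hP2 : ∀ v, (∑ e : E, if endVertex e = v then Rend e else 0)
        + ∑ w ∈ G.neighborFinset v, R w v = leak v)
    (hP2' : ∀ v, (∑ e : E, if endVertex e = v then Rend e else 0)
        + ∑ w ∈ G.neighborFinset v, R' w v = leak v) :
    ∀ v w, G.Adj v w → R v w = R' v w :=
  condition_flow_unique_general G hT m endVertex Rend leak R R' hP1 hP1' hP2 hP2'
end

section
/- Let G be a finite tree with n vertices, b bounded edges, and some ends, equipped with a condition flow of type m with leak function leak : V(G) → ℕ. Then the sum of the flows on all ends of G equals (Σ_{v ∈ V(G)} leak(v)) − (m − 1)·b. In particular, if leak(v) = m for all vertices, the sum of the end flows equals m·n − (m−1)·(n−1) = n + m − 1. -/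
/-!
Summing the flow condition over all vertices counts the flow of every end once and both
half-edges of every bounded edge once, and those two carry `m - 1` together; in a tree the
number of bounded edges is `n - 1`.
-/

open Finset

namespace SimpleGraph

variable {V : Type*} [Fintype V] (G : SimpleGraph V) [DecidableRel G.Adj]

theorem sum_sum_neighborFinset_comm {M : Type*} [AddCommMonoid M] (f : V → V → M) :
    ∑ v, ∑ w ∈ G.neighborFinset v, f w v = ∑ v, ∑ w ∈ G.neighborFinset v, f v w :=
  Finset.sum_comm' fun v w => by simp [adj_comm]

theorem sum_sum_neighborFinset_eq_card_edgeFinset_mul (R : V → V → ℕ) (c : ℕ)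
    (hR : ∀ v w, G.Adj v w → R v w + R w v = c) :
    ∑ v, ∑ w ∈ G.neighborFinset v, R w v = #G.edgeFinset * c := by
  have hdouble : ∑ v, ∑ w ∈ G.neighborFinset v, R w v + ∑ v, ∑ w ∈ G.neighborFinset v, R w v
      = 2 * (#G.edgeFinset * c) :=
    calc _ = ∑ v, ∑ w ∈ G.neighborFinset v, (R v w + R w v) := by
          nth_rewrite 1 [G.sum_sum_neighborFinset_comm]
          simp only [← sum_add_distrib]
      _ = ∑ v, G.degree v * c := by
          refine sum_congr rfl fun v _ => ?_
          rw [← card_neighborFinset_eq_degree, card_eq_sum_ones, sum_mul, one_mul]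
          exact sum_congr rfl fun w hw => hR v w ((G.mem_neighborFinset v w).mp hw)
      _ = 2 * (#G.edgeFinset * c) := by
          rw [← sum_mul, sum_degrees_eq_twice_card_edges, mul_assoc]
  omega

end SimpleGraph

theorem sum_ends_add_card_edgeFinset_mul_eq_sum_leak {V E : Type*} [Fintype V] [DecidableEq V]
    [Fintype E] (G : SimpleGraph V) [DecidableRel G.Adj] (c : ℕ) (endVertex : E → V)
    (Rend : E → ℕ) (leak : V → ℕ) (R : V → V → ℕ)
    (hR : ∀ v w, G.Adj v w → R v w + R w v = c)
    (hleak : ∀ v, (∑ e : E, if endVertex e = v then Rend e else 0)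
        + ∑ w ∈ G.neighborFinset v, R w v = leak v) :
    ∑ e, Rend e + #G.edgeFinset * c = ∑ v, leak v := by
  have hends : ∑ v, ∑ e : E, (if endVertex e = v then Rend e else 0) = ∑ e, Rend e := by
    rw [sum_comm]
    simp
  rw [← hends, ← G.sum_sum_neighborFinset_eq_card_edgeFinset_mul R c hR, ← sum_add_distrib]
  exact sum_congr rfl fun v _ => hleak v

/-- For a condition flow of type `m` on a finite tree with `b` bounded edges,
the sum of the flows on the ends equals `(∑ v, leak v) - (m-1)·b`.
In particular, if `leak v = m` for all `v`, the sum of end flows is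
`n + m - 1` where `n` is the number of vertices. -/
theorem sum_of_end_flows
    {V E : Type*} [Fintype V] [DecidableEq V] [Fintype E]
    (G : SimpleGraph V) [DecidableRel G.Adj] (hT : G.IsTree)
    (m : ℕ) (hm : 1 ≤ m)
    (endVertex : E → V) (Rend : E → ℕ) (leak : V → ℕ)
    (R : V → V → ℕ)
    (hP1 : ∀ v w, G.Adj v w → R v w + R w v = m - 1)
    (hP2 : ∀ v, (∑ e : E, if endVertex e = v then Rend e else 0)
        + ∑ w ∈ G.neighborFinset v, R w v = leak v) :
    (∑ e : E, (Rend e : ℤ))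
      = (∑ v : V, (leak v : ℤ)) - ((m : ℤ) - 1) * G.edgeFinset.card ∧
    ((∀ v, leak v = m) →
      (∑ e : E, (Rend e : ℤ)) = (Fintype.card V : ℤ) + m - 1) := by
  have hbalance : ∑ e, (Rend e : ℤ) + #G.edgeFinset * ((m : ℤ) - 1) = ∑ v, (leak v : ℤ) := by
    have := sum_ends_add_card_edgeFinset_mul_eq_sum_leak G (m - 1) endVertex Rend leak R hP1 hP2
    rw [← Nat.cast_one, ← Nat.cast_sub hm]
    exact_mod_cast this
  have hends : ∑ e, (Rend e : ℤ) = ∑ v, (leak v : ℤ) - ((m : ℤ) - 1) * #G.edgeFinset := by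
    linarith
  refine ⟨hends, fun hleak => ?_⟩
  have hcard : (#G.edgeFinset : ℤ) + 1 = Fintype.card V := mod_cast hT.card_edgeFinset
  simp only [hends, hleak, sum_const, card_univ, nsmul_eq_mul]
  rw [← hcard]
  ring
end

section
/- Let T be a finite tree and let β₁, β₂, β₃, β₄ be four distinct leaves of T. For a pair (β_i, β_j) let P(i,j) denote the unique path in T between β_i and β_j. Suppose that for one partition of {1,2,3,4} into two pairs, say {1,2} and {3,4}, the paths P(1,2) and P(3,4) intersect in exactly one vertex v. Then for every partition of {1,2,3,4} into two pairs {i₁,i₂} and {i₃,i₄}, the paths P(i₁,i₂) and P(i₃,i₄) also intersect exactly in the single vertex v. -/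
/-!
Let `A i` be the vertex set of the path from `v` to `β i`. Since `v` lies on both given paths,
these split at `v`, so `A 0 ∩ A 1 = A 2 ∩ A 3 = {v}`, and the cross intersections lie in the
intersection of the two given paths, which is `{v}`; hence the `A i` pairwise meet exactly in `v`.
Then for `i ≠ j` the concatenation of the paths `β i → v → β j` is a path, which by uniqueness of
paths in a tree is the path from `β i` to `β j`; its vertex set is `A i ∪ A j`, and
`(A i ∪ A j) ∩ (A k ∪ A l) = {v}` for every pairing.
-/

namespace SimpleGraph

variable {V : Type*} {G : SimpleGraph V}

theorem Walk.isPath_append_iff {u v w : V} {p : G.Walk u v} {q : G.Walk v w}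
    (hp : p.IsPath) (hq : q.IsPath) :
    (p.append q).IsPath ↔ ∀ x ∈ p.support, x ∈ q.support → x = v := by
  have hq' := hq.support_nodup
  rw [← Walk.cons_tail_support q, List.nodup_cons] at hq'
  rw [Walk.isPath_def, Walk.support_append, List.nodup_append]
  simp only [hp.support_nodup, hq'.2, true_and]
  constructor
  · intro h x hxp hxq
    rw [← Walk.cons_tail_support q, List.mem_cons] at hxq
    exact hxq.resolve_right fun hx => h x hxp x hx rfl
  · rintro h x hxp y hyq rfl
    exact hq'.1 (h x hxp (List.mem_of_mem_tail hyq) ▸ hyq)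

/-- In a forest this is the vertex set of the unique path from `a` to `b`. -/
def pathSupport (G : SimpleGraph V) (a b : V) : Set V :=
  {x | ∃ p : G.Walk a b, p.IsPath ∧ x ∈ p.support}

theorem pathSupport_comm (a b : V) : G.pathSupport a b = G.pathSupport b a := by
  suffices ∀ a b, G.pathSupport a b ⊆ G.pathSupport b a from (this a b).antisymm (this b a)
  rintro a b x ⟨p, hp, hx⟩
  exact ⟨p.reverse, hp.reverse, by rwa [Walk.support_reverse, List.mem_reverse]⟩

theorem Connected.left_mem_pathSupport (hG : G.Connected) (a b : V) : a ∈ G.pathSupport a b :=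
  let ⟨p, hp⟩ := hG.exists_isPath a b
  ⟨p, hp, p.start_mem_support⟩

theorem IsAcyclic.pathSupport_eq (hG : G.IsAcyclic) {a b : V} {p : G.Walk a b} (hp : p.IsPath) :
    G.pathSupport a b = {x | x ∈ p.support} := by
  ext x
  refine ⟨fun ⟨q, hq, hx⟩ => ?_, fun hx => ⟨p, hp, hx⟩⟩
  obtain rfl : q = p := congrArg Subtype.val ((hG.subsingleton_path a b).elim ⟨q, hq⟩ ⟨p, hp⟩)
  exact hx

theorem IsAcyclic.pathSupport_append (hG : G.IsAcyclic) {a b v : V} {p : G.Walk a v}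
    {q : G.Walk v b} (hpq : (p.append q).IsPath) :
    G.pathSupport a b = G.pathSupport a v ∪ G.pathSupport v b := by
  rw [hG.pathSupport_eq hpq, hG.pathSupport_eq hpq.of_append_left,
    hG.pathSupport_eq hpq.of_append_right]
  ext x
  simp [Walk.mem_support_append_iff]

theorem IsAcyclic.pathSupport_eq_union_of_mem (hG : G.IsAcyclic) {a b v : V}
    (hv : v ∈ G.pathSupport a b) :
    G.pathSupport a b = G.pathSupport v a ∪ G.pathSupport v b ∧
      G.pathSupport v a ∩ G.pathSupport v b = {v} := by
  obtain ⟨p, hp, hvp⟩ := hv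
  obtain ⟨q, r, hq, hr, rfl⟩ := hp.mem_support_iff_exists_append.mp hvp
  rw [pathSupport_comm v a, hG.pathSupport_append hp, hG.pathSupport_eq hq, hG.pathSupport_eq hr]
  refine ⟨rfl, Set.Subset.antisymm ?_ ?_⟩
  · exact fun x ⟨hxq, hxr⟩ => (Walk.isPath_append_iff hq hr).mp hp x hxq hxr
  · simp

theorem IsTree.mem_pathSupport_iff (hG : G.IsTree) {a b v : V} :
    v ∈ G.pathSupport a b ↔ G.pathSupport v a ∩ G.pathSupport v b = {v} := by
  refine ⟨fun hv => (hG.isAcyclic.pathSupport_eq_union_of_mem hv).2, fun h => ?_⟩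
  obtain ⟨q, hq⟩ := hG.connected.exists_isPath a v
  obtain ⟨r, hr⟩ := hG.connected.exists_isPath v b
  rw [pathSupport_comm v a, hG.isAcyclic.pathSupport_eq hq, hG.isAcyclic.pathSupport_eq hr] at h
  have hqr : (q.append r).IsPath :=
    (Walk.isPath_append_iff hq hr).mpr fun x hxq hxr => (h.subset ⟨hxq, hxr⟩ : x ∈ ({v} : Set V))
  exact ⟨q.append r, hqr, Walk.mem_support_append_iff q r |>.mpr (.inl q.end_mem_support)⟩

end SimpleGraph

theorem Set.pairwise_inter_eq_singleton_fin_four {α : Type*} {A : Fin 4 → Set α} {v : α}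
    (hv : ∀ i, v ∈ A i) (h01 : A 0 ∩ A 1 = {v}) (h23 : A 2 ∩ A 3 = {v})
    (h : (A 0 ∪ A 1) ∩ (A 2 ∪ A 3) = {v}) : Pairwise fun i j => A i ∩ A j = {v} := by
  intro i j hij
  wlog hlt : i < j generalizing i j
  · rw [Set.inter_comm]
    exact this hij.symm (hij.lt_or_gt.resolve_left hlt)
  refine Set.Subset.antisymm ?_ (Set.singleton_subset_iff.mpr ⟨hv i, hv j⟩)
  have hcross := h.subset
  simp only [Set.union_inter_distrib_right, Set.inter_union_distrib_left,
    Set.union_subset_iff] at hcross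
  fin_cases i <;> fin_cases j <;> simp_all

theorem path_criterion_general {V : Type*} [DecidableEq V]
    (G : SimpleGraph V) (hT : G.IsTree)
    (β : Fin 4 → V) (v : V)
    (h12 : ∀ (p : G.Walk (β 0) (β 1)) (q : G.Walk (β 2) (β 3)),
      p.IsPath → q.IsPath → p.support.toFinset ∩ q.support.toFinset = {v}) :
    ∀ (σ : Equiv.Perm (Fin 4)) (p : G.Walk (β (σ 0)) (β (σ 1)))
      (q : G.Walk (β (σ 2)) (β (σ 3))),
      p.IsPath → q.IsPath → p.support.toFinset ∩ q.support.toFinset = {v} := by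
  have hS_inter {a b c d : V} {p : G.Walk a b} {q : G.Walk c d} (hp : p.IsPath) (hq : q.IsPath) :
      p.support.toFinset ∩ q.support.toFinset = {v} ↔
        G.pathSupport a b ∩ G.pathSupport c d = {v} := by
    rw [← Finset.coe_inj, Finset.coe_inter, Finset.coe_singleton, List.coe_toFinset,
      List.coe_toFinset, hT.isAcyclic.pathSupport_eq hp, hT.isAcyclic.pathSupport_eq hq]
  set A : Fin 4 → Set V := fun i => G.pathSupport v (β i)
  obtain ⟨p01, hp01⟩ := hT.connected.exists_isPath (β 0) (β 1)
  obtain ⟨p23, hp23⟩ := hT.connected.exists_isPath (β 2) (β 3)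
  have hkey := (hS_inter hp01 hp23).mp (h12 p01 p23 hp01 hp23)
  have hv : v ∈ G.pathSupport (β 0) (β 1) ∩ G.pathSupport (β 2) (β 3) := hkey ▸ rfl
  obtain ⟨hS01, hA01⟩ := hT.isAcyclic.pathSupport_eq_union_of_mem hv.1
  obtain ⟨hS23, hA23⟩ := hT.isAcyclic.pathSupport_eq_union_of_mem hv.2
  have hA : Pairwise fun i j => A i ∩ A j = {v} :=
    Set.pairwise_inter_eq_singleton_fin_four (fun i => hT.connected.left_mem_pathSupport v (β i))
      hA01 hA23 (hS01 ▸ hS23 ▸ hkey)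
  have hS {i j : Fin 4} (hij : i ≠ j) : G.pathSupport (β i) (β j) = A i ∪ A j :=
    (hT.isAcyclic.pathSupport_eq_union_of_mem (hT.mem_pathSupport_iff.mpr (hA hij))).1
  intro σ p q hp hq
  have hσ {i j : Fin 4} (hij : i ≠ j) : σ i ≠ σ j := σ.injective.ne hij
  rw [hS_inter hp hq, hS (hσ (by decide)), hS (hσ (by decide)), Set.union_inter_distrib_right,
    Set.inter_union_distrib_left, Set.inter_union_distrib_left, hA (hσ (by decide)),
    hA (hσ (by decide)), hA (hσ (by decide)), hA (hσ (by decide))]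
  simp only [Set.union_self]

/-- Path criterion for degenerated tropical cross-ratios: in a finite tree with
four distinct leaves `β 0, β 1, β 2, β 3`, if the paths between `β 0, β 1` and
between `β 2, β 3` intersect exactly in the single vertex `v`, then for every
partition of the four leaves into two pairs the corresponding paths also
intersect exactly in `v`. -/
theorem path_criterion {V : Type*} [Fintype V] [DecidableEq V]
    (G : SimpleGraph V) [DecidableRel G.Adj] (hT : G.IsTree)
    (β : Fin 4 → V) (hinj : Function.Injective β)
    (hleaf : ∀ i, G.degree (β i) = 1) (v : V)
    (h12 : ∀ (p : G.Walk (β 0) (β 1)) (q : G.Walk (β 2) (β 3)),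
      p.IsPath → q.IsPath → p.support.toFinset ∩ q.support.toFinset = {v}) :
    ∀ (σ : Equiv.Perm (Fin 4)) (p : G.Walk (β (σ 0)) (β (σ 1)))
      (q : G.Walk (β (σ 2)) (β (σ 3))),
      p.IsPath → q.IsPath → p.support.toFinset ∩ q.support.toFinset = {v} :=
  path_criterion_general G hT β v h12
end
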